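/- arXiv:2503.12319 — 2 statements merged into one kernel-verified Lean document; each statement's English description precedes it below -/
import Mathlib

section
/- If A is a finitely generated algebra and S ⊂ A is a multiplicative set generated by a finite set of elements each of which q-commutes with every element of a generating set of A (i.e., for each generator s of S and each algebra generator x of A there is a unit c in the ground ring with s·x = c·x·s), then the Ore localization A[S⁻¹] is finitely generated, generated by the images of the generators of A together with the inverses of the generators of S. -/
open OreLocalization

/-- If `A` is finitely generated by `X` and `S` is a multiplicative set generated by
finitely many elements, each of which `q`-commutes (up to a unit of the ground ring)
with every element of `X`, then the Ore localization `A[S⁻¹]` is finitely generated,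
generated by the images of `X` together with the inverses of the generators of `S`. -/
theorem oreLocalization_finiteType (R A : Type*) [CommRing R] [Ring A] [Algebra R A]
    (X : Set A) (hXfin : X.Finite) (hXgen : Algebra.adjoin R X = ⊤)
    (m : ℕ) (s : Fin m → A) (S : Submonoid A)
    (hsS : ∀ i, s i ∈ S) (hSgen : S = Submonoid.closure (Set.range s))
    [OreLocalization.OreSet S]
    (hq : ∀ i, ∀ x ∈ X, ∃ c : Rˣ, s i * x = ((c : R) • (x * s i))) :
    Algebra.adjoin R
        ((OreLocalization.numeratorHom '' X : Set (OreLocalization S A)) ∪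
          Set.range (fun i => (1 : A) /ₒ ⟨s i, hsS i⟩)) = ⊤ ∧
      Algebra.FiniteType R (OreLocalization S A) := by
  set G : Set (OreLocalization S A) :=
    (OreLocalization.numeratorHom '' X : Set (OreLocalization S A)) ∪
      Set.range (fun i => (1 : A) /ₒ ⟨s i, hsS i⟩) with hG
  set T : Subalgebra R (OreLocalization S A) := Algebra.adjoin R G with hT
  -- `numeratorHom` as an `R`-algebra homomorphism
  let φ : A →ₐ[R] OreLocalization S A :=
    { OreLocalization.numeratorRingHom (S := S) with
      commutes' := fun r => rfl }
  have hφ : ∀ a : A, φ a = OreLocalization.numeratorHom a := fun a => rfl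
  -- images of all of `A` lie in `T`
  have hnum : ∀ a : A, OreLocalization.numeratorHom a ∈ T := by
    intro a
    have h1 : Algebra.adjoin R (φ '' X) ≤ T := by
      apply Algebra.adjoin_mono
      intro y hy
      exact Or.inl (by simpa [hφ] using hy)
    have h2 : φ a ∈ Algebra.adjoin R (φ '' X) := by
      rw [← AlgHom.map_adjoin, hXgen]
      exact ⟨a, trivial, rfl⟩
    exact h1 h2
  -- inverses of elements of `S` lie in `T`
  have hinv' : ∀ (t : A), t ∈ Submonoid.closure (Set.range s) →
      ∀ h : t ∈ S, ((1 : A) /ₒ (⟨t, h⟩ : S)) ∈ T := by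
    intro t ht
    induction ht using Submonoid.closure_induction with
    | mem x hx =>
        intro h
        obtain ⟨i, rfl⟩ := hx
        exact Algebra.subset_adjoin (Or.inr ⟨i, rfl⟩)
    | one =>
        intro h
        have : ((1 : A) /ₒ (⟨1, h⟩ : S)) = 1 := OreLocalization.one_def.symm
        rw [this]; exact T.one_mem
    | mul x y hx hy ihx ihy =>
        intro h
        have hxS : x ∈ S := hSgen ▸ hx
        have hyS : y ∈ S := hSgen ▸ hy
        have hxy : ((1 : A) /ₒ (⟨y, hyS⟩ : S)) * ((1 : A) /ₒ (⟨x, hxS⟩ : S)) =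
            (1 : A) /ₒ (⟨x, hxS⟩ * ⟨y, hyS⟩ : S) := OreLocalization.one_div_mul
        have : ((1 : A) /ₒ (⟨x * y, h⟩ : S)) =
            ((1 : A) /ₒ (⟨y, hyS⟩ : S)) * ((1 : A) /ₒ (⟨x, hxS⟩ : S)) := hxy.symm
        rw [this]
        exact T.mul_mem (ihy hyS) (ihx hxS)
  have hinv : ∀ t : S, ((1 : A) /ₒ t) ∈ T := by
    rintro ⟨t, ht⟩
    exact hinv' t (hSgen ▸ ht) ht
  have htop : T = ⊤ := by
    rw [eq_top_iff]
    intro z _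
    induction z using OreLocalization.ind with
    | _ a t =>
        have : (a /ₒ t) = ((1 : A) /ₒ t) * ((a : A) /ₒ (1 : S)) := by
          rw [OreLocalization.one_div_mul, one_mul]
        rw [this]
        exact T.mul_mem (hinv t) (hnum a)
  refine ⟨htop, ?_⟩
  have hGfin : G.Finite := (hXfin.image _).union (Set.finite_range _)
  exact ⟨⟨hGfin.toFinset, by rw [Set.Finite.coe_toFinset]; exact htop⟩⟩
end

section
/- A surjective ring homomorphism between commutative integral domains that are finitely generated algebras over a field of the same Krull dimension is injective, hence an isomorphism. -/
/-!
Finitely generated algebras over a field have finite Krull dimension, being quotients of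
polynomial rings in finitely many variables. If `f : A → B` were not injective, pick
`0 ≠ x ∈ ker f`: then `B` is a quotient of `A ⧸ (x)`, and since `x` is a non-zero-divisor of
the domain `A`, `dim B + 1 ≤ dim (A ⧸ (x)) + 1 ≤ dim A`, contradicting `dim A = dim B < ∞`.
-/

theorem Algebra.FiniteType.ringKrullDim_lt_top (k R : Type*) [Field k] [CommRing R]
    [Algebra k R] [Algebra.FiniteType k R] : ringKrullDim R < ⊤ := by
  obtain ⟨n, g, hg⟩ := Algebra.FiniteType.iff_quotient_mvPolynomial''.mp ‹Algebra.FiniteType k R›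
  refine (ringKrullDim_le_of_surjective g.toRingHom hg).trans_lt ?_
  rw [MvPolynomial.ringKrullDim_of_isNoetherianRing, ringKrullDim_eq_zero_of_field, zero_add,
    Nat.card_eq_fintype_card, Fintype.card_fin]
  exact WithBot.coe_lt_coe.mpr (ENat.natCast_lt_top n)

theorem ringKrullDim_add_one_le_of_surjective {A B : Type*} [CommRing A] [IsDomain A]
    [CommRing B] (f : A →+* B) (hf : Function.Surjective f) (hker : RingHom.ker f ≠ ⊥) :
    ringKrullDim B + 1 ≤ ringKrullDim A := by
  obtain ⟨x, hx, hx0⟩ := Submodule.exists_mem_ne_zero_of_ne_bot hker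
  have hspan : Ideal.span {x} ≤ RingHom.ker f := (Ideal.span_singleton_le_iff_mem _).mpr hx
  have hquot : ringKrullDim B ≤ ringKrullDim (A ⧸ Ideal.span {x}) :=
    ringKrullDim_le_of_surjective (Ideal.Quotient.lift _ f hspan)
      (Ideal.Quotient.lift_surjective_of_surjective _ hspan hf)
  calc ringKrullDim B + 1 ≤ ringKrullDim (A ⧸ Ideal.span {x}) + 1 := by gcongr
    _ ≤ ringKrullDim A :=
      ringKrullDim_quotient_succ_le_of_nonZeroDivisor (mem_nonZeroDivisors_of_ne_zero hx0)

theorem RingHom.injective_of_surjective_of_ringKrullDim_le {A B : Type*} [CommRing A]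
    [IsDomain A] [CommRing B] [Nontrivial B] (f : A →+* B) (hf : Function.Surjective f)
    (hdim : ringKrullDim A ≤ ringKrullDim B) (hB : ringKrullDim B < ⊤) :
    Function.Injective f := by
  rw [RingHom.injective_iff_ker_eq_bot]
  by_contra hker
  have hsucc := (ringKrullDim_add_one_le_of_surjective f hf hker).trans hdim
  have hnonneg : 0 ≤ ringKrullDim B := ringKrullDim_nonneg_of_nontrivial
  generalize ringKrullDim B = d at *
  induction d using WithBot.recBotCoe with
  | bot => simp at hnonneg
  | coe d =>
    induction d using ENat.recTopCoe with
    | top => simp at hB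
    | coe m => norm_cast at hsucc; omega

theorem bijective_of_surjective_of_krullDim_eq_general (k A B : Type*) [Field k]
    [CommRing A] [CommRing B] [IsDomain A] [IsDomain B]
    [Algebra k A] [Algebra k B] [Algebra.FiniteType k B]
    (hdim : ringKrullDim A = ringKrullDim B)
    (f : A →ₐ[k] B) (hf : Function.Surjective f) : Function.Bijective f :=
  ⟨RingHom.injective_of_surjective_of_ringKrullDim_le f.toRingHom hf hdim.le
    (Algebra.FiniteType.ringKrullDim_lt_top k B), hf⟩

/-- A surjective homomorphism between integral domains that are finitely generated
algebras over a field of the same Krull dimension is injective, hence an isomorphism. -/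
theorem bijective_of_surjective_of_krullDim_eq (k A B : Type*) [Field k]
    [CommRing A] [CommRing B] [IsDomain A] [IsDomain B]
    [Algebra k A] [Algebra k B] [Algebra.FiniteType k A] [Algebra.FiniteType k B]
    (hdim : ringKrullDim A = ringKrullDim B)
    (f : A →ₐ[k] B) (hf : Function.Surjective f) : Function.Bijective f :=
  bijective_of_surjective_of_krullDim_eq_general k A B hdim f hf
end
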